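/- Let f be n-times continuously differentiable on [x_k, b]. Define g_0 = f and g_m(x) = (g_{m-1}(x) - g_{m-1}(x_k))/(x - x_k) for x ∈ (x_k, b], with g_m(x_k) := f^{(m)}(x_k)/m!. Then for all m ≤ n-1 and x ∈ (x_k, b], g_m(x) = Σ_{j=m}^{n-1} f^{(j)}(x_k)/j! · (x - x_k)^{j-m} + ∫₀¹ f^{(n)}(x_k + t(x - x_k)) · (x - x_k)^{n-m} (1-t)^{n-1}/(n-1)! dt. -/

import Mathlib

/-!
Unrolling the recursion gives the closed form
`g_m(x) = (f(x) - ∑_{j<m} f^{(j)}(x_k)/j! (x - x_k)^j) / (x - x_k)^m` for `x ≠ x_k`,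
so the claim is Taylor's formula with integral remainder, rescaled from `[x_k, x]` to `[0, 1]`,
divided by `(x - x_k)^m`.
-/

noncomputable def divDiff (f : ℝ → ℝ) (xk a b : ℝ) : ℕ → ℝ → ℝ
  | 0 => f
  | m + 1 => fun x =>
      if x = xk then iteratedDerivWithin (m + 1) f (Set.Icc a b) xk / Nat.factorial (m + 1)
      else (divDiff f xk a b m x - divDiff f xk a b m xk) / (x - xk)

open Set Finset
open scoped Nat

theorem iteratedDerivWithin_subset {𝕜 F : Type*} [NontriviallyNormedField 𝕜]
    [NormedAddCommGroup F] [NormedSpace 𝕜 F] {f : 𝕜 → F} {s t : Set 𝕜} {x : 𝕜} {n : ℕ}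
    (st : s ⊆ t) (hs : UniqueDiffOn 𝕜 s) (ht : UniqueDiffOn 𝕜 t) (hf : ContDiffOn 𝕜 n f t)
    (hx : x ∈ s) :
    iteratedDerivWithin n f s x = iteratedDerivWithin n f t x := by
  simp only [iteratedDerivWithin_eq_iteratedFDerivWithin,
    iteratedFDerivWithin_subset st hs ht hf hx]

theorem taylor_integral_remainder_of_subset {F : Type*} [NormedAddCommGroup F]
    [NormedSpace ℝ F] [CompleteSpace F] {f : ℝ → F} {s : Set ℝ} {x₀ x : ℝ} {n : ℕ}
    (hs : UniqueDiffOn ℝ s) (hsub : uIcc x₀ x ⊆ s) (hf : ContDiffOn ℝ (n + 1 : ℕ) f s) :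
    f x - taylorWithinEval f n s x₀ x =
      ∫ t in x₀..x, ((x - t) ^ n / n !) • iteratedDerivWithin (n + 1) f s t := by
  rcases eq_or_ne x₀ x with rfl | hne
  · simp [taylorWithinEval_self]
  have hI : UniqueDiffOn ℝ (uIcc x₀ x) := uniqueDiffOn_uIcc hne
  have hderiv : ∀ j ≤ n + 1, ∀ t ∈ uIcc x₀ x,
      iteratedDerivWithin j f (uIcc x₀ x) t = iteratedDerivWithin j f s t := fun j hj t ht =>
    iteratedDerivWithin_subset hsub hI hs (hf.of_le (by exact_mod_cast hj)) ht
  have htaylor : taylorWithinEval f n s x₀ x = taylorWithinEval f n (uIcc x₀ x) x₀ x := by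
    simp only [taylor_within_apply]
    refine sum_congr rfl fun j hj => ?_
    rw [hderiv j (by simp at hj; omega) x₀ left_mem_uIcc]
  rw [htaylor, taylor_integral_remainder (hf.mono hsub)]
  exact intervalIntegral.integral_congr fun t ht => by rw [hderiv (n + 1) le_rfl t ht]

theorem integral_taylor_remainder_eq_integral_unitInterval (g : ℝ → ℝ) (a x : ℝ) (n : ℕ) :
    ∫ y in a..x, (x - y) ^ n / n ! * g y =
      (x - a) ^ (n + 1) * ∫ t in (0 : ℝ)..1, g (a + t * (x - a)) * (1 - t) ^ n / n ! := by
  have hsubst := intervalIntegral.mul_integral_comp_mul_add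
    (f := fun y => (x - y) ^ n / n ! * g y) (a := 0) (b := 1) (c := x - a) (d := a)
  simp only [mul_zero, zero_add, mul_one, sub_add_cancel] at hsubst
  rw [← hsubst, ← intervalIntegral.integral_const_mul, ← intervalIntegral.integral_const_mul]
  refine intervalIntegral.integral_congr fun t _ => ?_
  rw [show x - ((x - a) * t + a) = (1 - t) * (x - a) by ring,
    show (x - a) * t + a = a + t * (x - a) by ring, mul_pow]
  ring

theorem divDiff_self (f : ℝ → ℝ) (xk a b : ℝ) (m : ℕ) :
    divDiff f xk a b m xk = iteratedDerivWithin m f (Icc a b) xk / m ! := by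
  cases m <;> simp [divDiff]

theorem divDiff_of_ne (f : ℝ → ℝ) {xk x : ℝ} (a b : ℝ) (hx : x ≠ xk) (m : ℕ) :
    divDiff f xk a b m x =
      (f x - ∑ j ∈ range m, iteratedDerivWithin j f (Icc a b) xk / j ! * (x - xk) ^ j) /
        (x - xk) ^ m := by
  have hx' : x - xk ≠ 0 := sub_ne_zero.mpr hx
  induction m with
  | zero => simp [divDiff]
  | succ m ih =>
    simp only [divDiff, if_neg hx]
    rw [ih, divDiff_self, sum_range_succ]
    field_simp
    ring

theorem sum_sub_sum_range_div_pow (c : ℕ → ℝ) {h : ℝ} (hh : h ≠ 0) (R : ℝ) {m K : ℕ}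
    (hm : m ≤ K) :
    (∑ j ∈ range (K + 1), c j * h ^ j + h ^ (K + 1) * R - ∑ j ∈ range m, c j * h ^ j) / h ^ m =
      ∑ j ∈ Icc m K, c j * h ^ (j - m) + h ^ (K + 1 - m) * R := by
  rw [← sum_range_add_sum_Ico _ (by omega : m ≤ K + 1), ← Finset.Ico_add_one_right_eq_Icc,
    add_sub_right_comm, add_sub_cancel_left, add_div, sum_div]
  congr 1
  · refine sum_congr rfl fun j hj => ?_
    rw [pow_sub₀ h hh (mem_Ico.mp hj).1]
    field_simp
  · rw [pow_sub₀ h hh (by omega)]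
    field_simp

theorem divDiff_taylor (f : ℝ → ℝ) (xk b : ℝ) (hxb : xk < b) (n : ℕ) (hn : 1 ≤ n)
    (hf : ContDiffOn ℝ n f (Set.Icc xk b)) :
    ∀ m ≤ n - 1, ∀ x ∈ Set.Ioc xk b,
      divDiff f xk xk b m x =
        (∑ j ∈ Finset.Icc m (n - 1),
            iteratedDerivWithin j f (Set.Icc xk b) xk / Nat.factorial j *
              (x - xk) ^ (j - m)) +
          ∫ t in (0 : ℝ)..1,
            iteratedDerivWithin n f (Set.Icc xk b) (xk + t * (x - xk)) *
              (x - xk) ^ (n - m) * (1 - t) ^ (n - 1) / Nat.factorial (n - 1) := by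
  obtain ⟨k, rfl⟩ : ∃ k, n = k + 1 := ⟨n - 1, by omega⟩
  rintro m hm x ⟨hxk, hxb'⟩
  rw [Nat.add_sub_cancel] at hm ⊢
  have htaylor := taylor_integral_remainder_of_subset (uniqueDiffOn_Icc hxb)
    (uIcc_of_le hxk.le ▸ Icc_subset_Icc_right hxb') hf
  have hcoeff : ∀ j, (j ! : ℝ)⁻¹ * (x - xk) ^ j * iteratedDerivWithin j f (Icc xk b) xk =
      iteratedDerivWithin j f (Icc xk b) xk / j ! * (x - xk) ^ j := fun j => by ring
  simp only [taylor_within_apply, smul_eq_mul, hcoeff,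
    integral_taylor_remainder_eq_integral_unitInterval] at htaylor
  rw [divDiff_of_ne f xk b hxk.ne', sub_eq_iff_eq_add'.mp htaylor,
    sum_sub_sum_range_div_pow _ (sub_ne_zero.mpr hxk.ne') _ hm,
    ← intervalIntegral.integral_const_mul]
  congr 1
  exact intervalIntegral.integral_congr fun t _ => by ring
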